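/- Let r be a rational number and let C(X) be the Catalan number generating function. Then the matrix product of the Riordan matrix of (C(rX)², X·C(rX)²) with the Riordan matrix of (1/(1+rX)², X/(1+rX)²) is the identity matrix; that is, the inverse of the Riordan matrix of (C(rX)², X·C(rX)²) is the Riordan matrix of (1/(1+rX)², X/(1+rX)²). -/

import Mathlib

open PowerSeries Finset

/-- The Riordan matrix of the pair `(g, f)`: entries `M n k = [Xⁿ] (g * fᵏ)`. -/
noncomputable def riordan (g f : PowerSeries ℚ) (n k : ℕ) : ℚ :=
  PowerSeries.coeff (R := ℚ) n (g * f ^ k)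

/-- The generating function of the Catalan numbers,
`C(X) = ∑_{n≥0} (1/(n+1))·C(2n,n)·Xⁿ`. -/
noncomputable def catGF : PowerSeries ℚ :=
  PowerSeries.mk fun n => (1 / ((n : ℚ) + 1)) * (Nat.choose (2 * n) n : ℚ)

lemma mul_aux {R : Type*} [CommRing R] (v y x : R) (k : ℕ) :
    (v * (x * v) ^ k) * y ^ (k + 1) = x ^ k * (v * y) ^ (k + 1) := by
  rw [mul_pow, mul_pow]
  ring

lemma coeff_catGF (n : ℕ) : PowerSeries.coeff (R := ℚ) n catGF = (catalan n : ℚ) := by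
  rw [catGF, PowerSeries.coeff_mk]
  have h := succ_mul_catalan_eq_centralBinom n
  have h2 : ((n : ℚ) + 1) * (catalan n : ℚ) = ((2 * n).choose n : ℚ) := by
    rw [Nat.centralBinom] at h
    exact_mod_cast congrArg (Nat.cast : ℕ → ℚ) h
  have hn : ((n : ℚ) + 1) ≠ 0 := by positivity
  field_simp
  linarith [h2]

lemma catGF_eq : catGF = 1 + X * catGF ^ 2 := by
  ext n
  cases n with
  | zero => simp [coeff_catGF, catGF]
  | succ n =>
    rw [map_add, PowerSeries.coeff_succ_X_mul, coeff_catGF, sq, PowerSeries.coeff_mul]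
    have : (PowerSeries.coeff (R := ℚ) (n+1)) (1 : PowerSeries ℚ) = 0 := by simp
    rw [this, zero_add, catalan_succ']
    push_cast
    exact Finset.sum_congr rfl fun ij _ => by rw [coeff_catGF, coeff_catGF]

lemma one_add_pow (r : ℚ) (z : PowerSeries ℚ) (m : ℕ) :
    (1 + PowerSeries.C (R := ℚ) r * z) ^ m
      = ∑ i ∈ range (m + 1), PowerSeries.C (R := ℚ) ((m.choose i : ℚ) * r ^ i) * z ^ i := by
  rw [add_comm, add_pow]
  refine Finset.sum_congr rfl fun i _ => ?_
  simp only [one_pow, mul_one, mul_pow, map_mul, map_pow, map_natCast]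
  ring

lemma coeff_u_pow (r : ℚ) (m q : ℕ) :
    PowerSeries.coeff (R := ℚ) q ((1 + PowerSeries.C (R := ℚ) r * X) ^ m)
      = (m.choose q : ℚ) * r ^ q := by
  rw [one_add_pow, map_sum]
  simp only [PowerSeries.coeff_C_mul, PowerSeries.coeff_X_pow, mul_ite, mul_one, mul_zero]
  rw [Finset.sum_ite_eq (range (m+1)) q (fun i => (m.choose i : ℚ) * r ^ i)]
  by_cases h : q ∈ range (m+1)
  · rw [if_pos h]
  · rw [if_neg h]
    rw [Finset.mem_range, not_lt] at h
    rw [Nat.choose_eq_zero_of_lt (by omega)]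
    simp

theorem moment_array_inverse (r : ℚ) :
    ∀ n k : ℕ,
      ∑ j ∈ range (n + 1),
          riordan ((rescale r catGF) ^ 2) (X * (rescale r catGF) ^ 2) n j
            * riordan ((1 + PowerSeries.C (R := ℚ) r * X) ^ 2)⁻¹
                (X * ((1 + PowerSeries.C (R := ℚ) r * X) ^ 2)⁻¹) j k
        = if n = k then 1 else 0 := by
  intro n k
  simp only [riordan]
  set c : PowerSeries ℚ := rescale r catGF with hc
  set u : PowerSeries ℚ := 1 + PowerSeries.C (R := ℚ) r * X with hu
  set f : PowerSeries ℚ := X * c ^ 2 with hf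
  set B : PowerSeries ℚ := (u ^ 2)⁻¹ * (X * (u ^ 2)⁻¹) ^ k with hB
  have hc1 : PowerSeries.constantCoeff (R := ℚ) c = 1 := by
    rw [hc, ← PowerSeries.coeff_zero_eq_constantCoeff_apply, PowerSeries.coeff_rescale,
      coeff_catGF]
    simp
  have hu0 : PowerSeries.constantCoeff (R := ℚ) (u ^ 2) ≠ 0 := by
    rw [hu]; simp
  have hcat : c = 1 + PowerSeries.C (R := ℚ) r * f := by
    rw [hf, hc]
    conv_lhs => rw [catGF_eq]
    rw [map_add, map_one, map_mul, map_pow, rescale_X, mul_assoc]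
  set b : ℕ → ℚ := fun j => PowerSeries.coeff (R := ℚ) j B with hb
  set w : ℕ → ℚ := fun i => (((2 * k + 2).choose i : ℕ) : ℚ) * r ^ i with hw
  clear_value c u f B b w
  -- B * u^(2k+2) = X^k
  have hBu : B * u ^ (2 * k + 2) = X ^ k := by
    have hinv : ((u ^ 2)⁻¹ * u ^ 2) ^ (k + 1) = 1 := by
      rw [PowerSeries.inv_mul_cancel _ hu0, one_pow]
    have h2 : u ^ (2 * k + 2) = (u ^ 2) ^ (k + 1) := by
      rw [show 2 * k + 2 = 2 * (k + 1) by ring, pow_mul]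
    calc B * u ^ (2 * k + 2) = X ^ k * ((u ^ 2)⁻¹ * u ^ 2) ^ (k + 1) := by
          rw [hB, h2, mul_aux]
      _ = X ^ k := by rw [hinv, mul_one]
  -- coefficient recurrence
  have hrec : ∀ s : ℕ, ∑ j ∈ range (s + 1), b j * w (s - j) = if s = k then 1 else 0 := by
    intro s
    have h := congrArg (PowerSeries.coeff (R := ℚ) s) hBu
    rw [PowerSeries.coeff_mul, PowerSeries.coeff_X_pow,
      Finset.Nat.sum_antidiagonal_eq_sum_range_succ_mk] at h
    rw [← h]
    refine Finset.sum_congr rfl fun j hj => ?_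
    simp only [hb, hw]
    rw [hu, coeff_u_pow]
  -- vanishing of coefficients of high powers of f
  have hphi : ∀ m t : ℕ, m < t → PowerSeries.coeff (R := ℚ) m (f ^ t) = 0 := by
    intro m t hmt
    rw [hf, mul_pow, PowerSeries.coeff_X_pow_mul', if_neg (by omega)]
  set T : PowerSeries ℚ := ∑ j ∈ range (n + 1), PowerSeries.C (R := ℚ) (b j) * f ^ j with hT
  clear_value T
  -- the key congruence
  have hstar : ∀ m : ℕ, m < n + 1 →
      PowerSeries.coeff (R := ℚ) m (T * c ^ (2 * k + 2) - f ^ k) = 0 := by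
    intro m hm
    rw [map_sub, sub_eq_zero]
    have hexp : c ^ (2 * k + 2) = ∑ i ∈ range (2 * k + 2 + 1), PowerSeries.C (R := ℚ) (w i) * f ^ i := by
      simp only [hw]
      conv_lhs => rw [hcat]
      rw [one_add_pow]
    have hterm : ∀ j, (PowerSeries.C (R := ℚ) (b j) * f ^ j) * c ^ (2 * k + 2)
        = ∑ i ∈ range (2 * k + 2 + 1), PowerSeries.C (R := ℚ) (b j * w i) * f ^ (j + i) := by
      intro j
      rw [hexp, Finset.mul_sum]
      refine Finset.sum_congr rfl fun i _ => ?_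
      rw [map_mul, pow_add, mul_mul_mul_comm]
    rw [hT, Finset.sum_mul, Finset.sum_congr rfl fun j _ => hterm j, map_sum]
    simp only [map_sum, PowerSeries.coeff_C_mul]
    have hsplit : ∀ j i : ℕ, PowerSeries.coeff (R := ℚ) m (f ^ (j + i))
        = ∑ s ∈ range (m + 1), if j + i = s then PowerSeries.coeff (R := ℚ) m (f ^ s) else 0 := by
      intro j i
      rw [Finset.sum_ite_eq (range (m + 1)) (j + i) (fun s => PowerSeries.coeff (R := ℚ) m (f ^ s))]
      by_cases h : j + i ∈ range (m + 1)
      · rw [if_pos h]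
      · rw [if_neg h]
        rw [Finset.mem_range, not_lt] at h
        exact hphi m (j + i) (by omega)
    simp_rw [hsplit, Finset.mul_sum, mul_ite, mul_zero]
    rw [Finset.sum_congr rfl fun j _ => Finset.sum_comm, Finset.sum_comm]
    have hmain : ∀ s ∈ range (m + 1),
        (∑ j ∈ range (n + 1), ∑ i ∈ range (2 * k + 2 + 1),
          if j + i = s then b j * w i * PowerSeries.coeff (R := ℚ) m (f ^ s) else 0)
        = (if s = k then 1 else 0) * PowerSeries.coeff (R := ℚ) m (f ^ s) := by
      intro s hs
      have hsm : s ≤ m := by have := Finset.mem_range.mp hs; omega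
      have inner : ∀ j, (∑ i ∈ range (2 * k + 2 + 1),
          if j + i = s then b j * w i * PowerSeries.coeff (R := ℚ) m (f ^ s) else 0)
          = if j ≤ s then b j * w (s - j) * PowerSeries.coeff (R := ℚ) m (f ^ s) else 0 := by
        intro j
        by_cases hj : j ≤ s
        · by_cases hi : s - j < 2 * k + 2 + 1
          · rw [Finset.sum_eq_single (s - j) (fun i _ hne => if_neg (by omega))
              (fun habs => absurd (Finset.mem_range.mpr hi) habs), if_pos (by omega),
              if_pos hj]
          · have hw0 : w (s - j) = 0 := by
              simp only [hw]
              rw [Nat.choose_eq_zero_of_lt (by omega)]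
              simp
            rw [Finset.sum_eq_zero (fun i hi2 => if_neg
              (by have := Finset.mem_range.mp hi2; omega)), if_pos hj, hw0]
            ring
        · rw [if_neg hj, Finset.sum_eq_zero]
          intro i _
          exact if_neg (by omega)
      rw [Finset.sum_congr rfl fun j _ => inner j, ← hrec s, Finset.sum_mul,
        ← Finset.sum_subset (Finset.range_subset_range.mpr (show s + 1 ≤ n + 1 by omega))
          (fun j _ hj => if_neg (fun hle => hj (Finset.mem_range.mpr (by omega))))]
      refine Finset.sum_congr rfl fun j hj => ?_
      rw [if_pos (by have := Finset.mem_range.mp hj; omega)]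
    rw [Finset.sum_congr rfl hmain]
    simp_rw [ite_mul, one_mul, zero_mul]
    rw [Finset.sum_ite_eq' (range (m + 1)) k (fun s => PowerSeries.coeff (R := ℚ) m (f ^ s))]
    by_cases hk : k ∈ range (m + 1)
    · rw [if_pos hk]
    · rw [if_neg hk]
      rw [Finset.mem_range, not_lt] at hk
      exact (hphi m k (by omega)).symm
  have hdvd : (X : PowerSeries ℚ) ^ (n + 1) ∣ T * c ^ (2 * k + 2) - f ^ k :=
    PowerSeries.X_pow_dvd_iff.mpr fun m hm => hstar m hm
  have hfk : f ^ k = X ^ k * c ^ (2 * k) := by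
    rw [hf, mul_pow, ← pow_mul]
  have hck : PowerSeries.constantCoeff (R := ℚ) (c ^ (2 * k)) ≠ 0 := by
    rw [map_pow, hc1, one_pow]
    exact one_ne_zero
  have h1 : c ^ (2 * k) * (c ^ (2 * k))⁻¹ = 1 := PowerSeries.mul_inv_cancel _ hck
  have hdvd2 : (X : PowerSeries ℚ) ^ (n + 1) ∣ T * c ^ 2 - X ^ k := by
    have h3 := hdvd.mul_right (c ^ (2 * k))⁻¹
    have heq : (T * c ^ (2 * k + 2) - f ^ k) * (c ^ (2 * k))⁻¹ = T * c ^ 2 - X ^ k := by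
      rw [hfk]
      linear_combination (T * c ^ 2 - X ^ k) * h1
    rwa [heq] at h3
  have hco : PowerSeries.coeff (R := ℚ) n (T * c ^ 2) = if n = k then 1 else 0 := by
    have h4 := PowerSeries.X_pow_dvd_iff.mp hdvd2 n (by omega)
    rw [map_sub, sub_eq_zero] at h4
    rw [h4, PowerSeries.coeff_X_pow]
  rw [← hco, hT, Finset.sum_mul, map_sum]
  refine Finset.sum_congr rfl fun j _ => ?_
  simp only [hb]
  rw [show PowerSeries.C (R := ℚ) ((PowerSeries.coeff (R := ℚ) j) B) * f ^ j * c ^ 2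
      = PowerSeries.C (R := ℚ) ((PowerSeries.coeff (R := ℚ) j) B) * (c ^ 2 * f ^ j) by ring,
    PowerSeries.coeff_C_mul, mul_comm]
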